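/- arXiv:2412.09970 — 2 statements merged into one kernel-verified Lean document; each statement's English description precedes it below -/
import Mathlib

section
/- There exists an absolute constant C > 0 such that for every δ ∈ (0,1) and every natural number n, (1/A_n^δ) · ∫_{Γ₁} | Σ_{k=0}^{n} A_{n−k}^{δ−1} · D*_k(u1,u2) | du1 du2 ≤ C, where Γ₁ = {(u1,u2) ∈ Γ : u1 ≤ 1/(n+1)}. -/
open MeasureTheory Finset

/-- The triangle `Γ = {(u₁,u₂) : 0 ≤ u₂ ≤ u₁/3, 0 ≤ u₁ ≤ 1}`. -/
def GammaT : Set (ℝ × ℝ) := {u | 0 ≤ u.2 ∧ u.2 ≤ u.1 / 3 ∧ 0 ≤ u.1 ∧ u.1 ≤ 1}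

open Finset in
/-- Cesàro numbers: `A_n^δ = (δ+1)(δ+2)⋯(δ+n)/n!`, with `A_0^δ = 1`. -/
noncomputable def cesaroA (δ : ℝ) (n : ℕ) : ℝ :=
  (∏ i ∈ Finset.range n, (δ + i + 1)) / n.factorial

/-- The transformed hexagonal Dirichlet kernel `D*_k`. -/
noncomputable def DstarK (k : ℕ) (u : ℝ × ℝ) : ℝ :=
  (Real.sin (((k : ℝ) + 1) * Real.pi * u.2) *
      Real.sin (((k : ℝ) + 1) * Real.pi * (u.1 + u.2) / 2) *
      Real.sin (((k : ℝ) + 1) * Real.pi * (u.1 - u.2) / 2) -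
    Real.sin ((k : ℝ) * Real.pi * u.2) *
      Real.sin ((k : ℝ) * Real.pi * (u.1 + u.2) / 2) *
      Real.sin ((k : ℝ) * Real.pi * (u.1 - u.2) / 2)) /
    (Real.sin (Real.pi * u.2) * Real.sin (Real.pi * (u.1 + u.2) / 2) *
      Real.sin (Real.pi * (u.1 - u.2) / 2))

/-! The kernel satisfies `|D*_k| ≤ 192 (k+1)²` on all of `Γ`: writing `D*_k` as a quotient of
products of sines at `p, q, r ∈ [0, 2π/3]`, the numerator is a difference of two triple products
and is `O((k+1)² pqr)` because `sin` is 1-Lipschitz, while the denominator is `≥ pqr/64` since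
`sin t ≥ t/4` there (on the edges of `Γ` it vanishes and `D*_k = 0` by division by zero).
The Cesàro weights `A^{δ-1}_j` are positive and sum to `A^δ_n`, so the integrand is
`O((n+1)² A^δ_n)` pointwise, and `Γ₁` lies in a rectangle of area `1/(3(n+1)²)`. -/

open Real

lemma cesaroA_pos {δ : ℝ} (hδ : -1 < δ) (n : ℕ) : 0 < cesaroA δ n := by
  unfold cesaroA
  refine div_pos (prod_pos fun i _ => ?_) (mod_cast n.factorial_pos)
  linarith [(i.cast_nonneg : (0 : ℝ) ≤ i)]

lemma cesaroA_succ (δ : ℝ) (n : ℕ) :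
    cesaroA δ (n + 1) = cesaroA δ n + cesaroA (δ - 1) (n + 1) := by
  unfold cesaroA
  rw [prod_range_succ, prod_range_succ' (fun i : ℕ => δ - 1 + i + 1), Nat.factorial_succ]
  have hshift : ∀ i : ℕ, δ - 1 + ((i + 1 : ℕ) : ℝ) + 1 = δ + i + 1 := fun i => by push_cast; ring
  simp only [hshift]
  push_cast
  field_simp
  ring

lemma sum_range_cesaroA_sub_one (δ : ℝ) (n : ℕ) :
    ∑ j ∈ range (n + 1), cesaroA (δ - 1) j = cesaroA δ n := by
  induction n with
  | zero => simp [cesaroA]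
  | succ n ih => rw [sum_range_succ, ih, cesaroA_succ δ n]

lemma abs_sum_cesaroA_mul_le {δ : ℝ} (hδ : 0 < δ) (n : ℕ) {f : ℕ → ℝ} {M : ℝ}
    (hf : ∀ k ≤ n, |f k| ≤ M) :
    |∑ k ∈ range (n + 1), cesaroA (δ - 1) (n - k) * f k| ≤ M * cesaroA δ n := by
  have hweight : ∀ j, 0 < cesaroA (δ - 1) j := cesaroA_pos (by linarith)
  calc |∑ k ∈ range (n + 1), cesaroA (δ - 1) (n - k) * f k|
      ≤ ∑ k ∈ range (n + 1), cesaroA (δ - 1) (n - k) * M := by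
        refine (abs_sum_le_sum_abs _ _).trans (sum_le_sum fun k hk => ?_)
        rw [abs_mul, abs_of_pos (hweight _)]
        exact mul_le_mul_of_nonneg_left (hf k (Nat.lt_succ_iff.mp (mem_range.mp hk)))
          (hweight _).le
    _ = M * cesaroA δ n := by
        rw [← sum_mul, mul_comm, ← sum_range_cesaroA_sub_one δ n,
          ← sum_range_reflect (fun j => cesaroA (δ - 1) j) (n + 1)]
        simp only [Nat.add_sub_cancel]

lemma div_four_le_sin {t : ℝ} (ht₀ : 0 ≤ t) (ht : t ≤ 2 * π / 3) : t / 4 ≤ sin t := by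
  have hπ := pi_le_four
  rcases le_total t (π / 2) with hle | hge
  · have h2π : 1 / 4 ≤ 2 / π := by rw [div_le_div_iff₀ (by norm_num) pi_pos]; linarith
    nlinarith [mul_le_sin ht₀ hle]
  · -- reflect to `π - t ∈ [π/3, π/2]`, where `sin ≥ 2/3 ≥ t/4`
    rw [← sin_pi_sub]
    have h := mul_le_sin (x := π - t) (by linarith) (by linarith)
    have h2π : 2 / π * (π / 3) = 2 / 3 := by field_simp
    nlinarith [mul_le_mul_of_nonneg_left (show π / 3 ≤ π - t by linarith)
      (show 0 ≤ 2 / π by positivity)]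

lemma abs_mul_mul_sub_mul_mul_le {a₁ a₂ a₃ b₁ b₂ b₃ d₁ d₂ d₃ M₁ M₂ M₃ : ℝ}
    (hd₁ : |a₁ - b₁| ≤ d₁) (hd₂ : |a₂ - b₂| ≤ d₂) (hd₃ : |a₃ - b₃| ≤ d₃)
    (ha₂ : |a₂| ≤ M₂) (ha₃ : |a₃| ≤ M₃) (hb₁ : |b₁| ≤ M₁) (hb₂ : |b₂| ≤ M₂) :
    |a₁ * a₂ * a₃ - b₁ * b₂ * b₃| ≤ d₁ * M₂ * M₃ + M₁ * d₂ * M₃ + M₁ * M₂ * d₃ := by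
  have htelescope : a₁ * a₂ * a₃ - b₁ * b₂ * b₃ =
      (a₁ - b₁) * a₂ * a₃ + b₁ * (a₂ - b₂) * a₃ + b₁ * b₂ * (a₃ - b₃) := by ring
  rw [htelescope]
  refine (abs_add_three _ _ _).trans ?_
  have hM₁ : 0 ≤ M₁ := (abs_nonneg _).trans hb₁
  have hM₂ : 0 ≤ M₂ := (abs_nonneg _).trans hb₂
  have hd₁₀ : 0 ≤ d₁ := (abs_nonneg _).trans hd₁
  have hd₂₀ : 0 ≤ d₂ := (abs_nonneg _).trans hd₂
  simp only [abs_mul]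
  gcongr

lemma abs_prod_sin_succ_mul_sub_le {m x y z : ℝ} (hm : 0 ≤ m) (hx : 0 ≤ x) (hy : 0 ≤ y)
    (hz : 0 ≤ z) :
    |sin ((m + 1) * x) * sin ((m + 1) * y) * sin ((m + 1) * z) -
        sin (m * x) * sin (m * y) * sin (m * z)| ≤ 3 * (m + 1) ^ 2 * (x * y * z) := by
  have hdiff : ∀ w, 0 ≤ w → |sin ((m + 1) * w) - sin (m * w)| ≤ w := fun w hw => by
    simpa [show (m + 1) * w - m * w = w by ring, abs_of_nonneg hw] using
      abs_sin_sub_sin_le ((m + 1) * w) (m * w)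
  have hsucc : ∀ w, 0 ≤ w → |sin ((m + 1) * w)| ≤ (m + 1) * w := fun w hw =>
    abs_sin_le_abs.trans (abs_of_nonneg (by positivity)).le
  have hself : ∀ w, 0 ≤ w → |sin (m * w)| ≤ (m + 1) * w := fun w hw =>
    abs_sin_le_abs.trans ((abs_of_nonneg (by positivity)).le.trans (by nlinarith))
  refine (abs_mul_mul_sub_mul_mul_le (hdiff x hx) (hdiff y hy) (hdiff z hz) (hsucc y hy)
    (hsucc z hz) (hself x hx) (hself y hy)).trans (le_of_eq ?_)
  ring

lemma abs_DstarK_le {u : ℝ × ℝ} (hu : u ∈ GammaT) (k : ℕ) :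
    |DstarK k u| ≤ 192 * ((k : ℝ) + 1) ^ 2 := by
  obtain ⟨hu₂, hu₂₁, hu₁, hu₁'⟩ := hu
  have hπ := pi_pos
  set p := π * u.2
  set q := π * (u.1 + u.2) / 2
  set r := π * (u.1 - u.2) / 2
  have hp : 0 ≤ p := by positivity
  have hq : 0 ≤ q := by positivity
  have hr : 0 ≤ r := div_nonneg (mul_nonneg hπ.le (by linarith)) zero_le_two
  have hden : p / 4 * (q / 4) * (r / 4) ≤ sin p * sin q * sin r := by
    have hp' : p ≤ 2 * π / 3 := by simp only [p]; nlinarith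
    have hq' : q ≤ 2 * π / 3 := by simp only [q]; nlinarith
    have hr' : r ≤ 2 * π / 3 := by simp only [r]; nlinarith
    have hsp := div_four_le_sin hp hp'
    have hsq := div_four_le_sin hq hq'
    have hsr := div_four_le_sin hr hr'
    have hsp₀ : 0 ≤ sin p := by linarith
    have hsq₀ : 0 ≤ sin q := by linarith
    exact mul_le_mul (mul_le_mul hsp hsq (by positivity) hsp₀) hsr (by positivity)
      (mul_nonneg hsp₀ hsq₀)
  have hnum := abs_prod_sin_succ_mul_sub_le (k.cast_nonneg : (0 : ℝ) ≤ k) hp hq hr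
  have hDstarK : DstarK k u = (sin ((k + 1) * p) * sin ((k + 1) * q) * sin ((k + 1) * r) -
      sin (k * p) * sin (k * q) * sin (k * r)) / (sin p * sin q * sin r) := by
    simp only [DstarK, p, q, r]
    ring_nf
  rw [hDstarK, abs_div, abs_of_nonneg ((by positivity : (0 : ℝ) ≤ _).trans hden)]
  refine div_le_of_le_mul₀ ((by positivity : (0 : ℝ) ≤ _).trans hden) (by positivity) ?_
  nlinarith [mul_le_mul_of_nonneg_left hden (by positivity : (0 : ℝ) ≤ 192 * ((k : ℝ) + 1) ^ 2)]

lemma GammaT_inter_subset_Icc_prod_Icc (a : ℝ) :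
    GammaT ∩ {u : ℝ × ℝ | u.1 ≤ a} ⊆ Set.Icc 0 a ×ˢ Set.Icc 0 (a / 3) := by
  rintro u ⟨⟨hu₂, hu₂₁, hu₁, -⟩, hu₁a : u.1 ≤ a⟩
  exact ⟨⟨hu₁, hu₁a⟩, hu₂, by linarith⟩

lemma volume_GammaT_inter_lt_top (a : ℝ) : volume (GammaT ∩ {u : ℝ × ℝ | u.1 ≤ a}) < ⊤ :=
  measure_lt_top_of_subset (GammaT_inter_subset_Icc_prod_Icc a)
    (isCompact_Icc.prod isCompact_Icc).measure_lt_top.ne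

lemma volume_real_GammaT_inter_le {a : ℝ} (ha : 0 ≤ a) :
    volume.real (GammaT ∩ {u : ℝ × ℝ | u.1 ≤ a}) ≤ a ^ 2 / 3 := by
  calc volume.real (GammaT ∩ {u : ℝ × ℝ | u.1 ≤ a})
      ≤ volume.real (Set.Icc (0 : ℝ) a ×ˢ Set.Icc (0 : ℝ) (a / 3)) :=
        measureReal_mono (GammaT_inter_subset_Icc_prod_Icc a)
          (isCompact_Icc.prod isCompact_Icc).measure_lt_top.ne
    _ = a ^ 2 / 3 := by
        rw [Measure.volume_eq_prod, measureReal_prod_prod, Real.volume_real_Icc,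
          Real.volume_real_Icc]
        simp only [sub_zero, max_eq_left ha, max_eq_left (by positivity : 0 ≤ a / 3)]
        ring

theorem stmt_12 :
    ∃ C : ℝ, 0 < C ∧
      ∀ δ : ℝ, 0 < δ → δ < 1 → ∀ n : ℕ,
        (1 / cesaroA δ n) *
            ∫ u in GammaT ∩ {u : ℝ × ℝ | u.1 ≤ 1 / ((n : ℝ) + 1)},
              |∑ k ∈ Finset.range (n + 1), cesaroA (δ - 1) (n - k) * DstarK k u| ≤ C := by
  refine ⟨64, by norm_num, fun δ hδ _ n => ?_⟩
  have hA := cesaroA_pos (by linarith : -1 < δ) n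
  have hpointwise : ∀ u ∈ GammaT ∩ {u : ℝ × ℝ | u.1 ≤ 1 / ((n : ℝ) + 1)},
      ‖|∑ k ∈ range (n + 1), cesaroA (δ - 1) (n - k) * DstarK k u|‖
        ≤ 192 * ((n : ℝ) + 1) ^ 2 * cesaroA δ n := fun u hu => by
    rw [norm_abs_eq_norm, Real.norm_eq_abs]
    refine abs_sum_cesaroA_mul_le hδ n fun k hk => (abs_DstarK_le hu.1 k).trans ?_
    gcongr
  have hintegral := (le_abs_self _).trans
    (norm_setIntegral_le_of_norm_le_const (volume_GammaT_inter_lt_top _) hpointwise)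
  have hvolume := volume_real_GammaT_inter_le (a := 1 / ((n : ℝ) + 1)) (by positivity)
  calc _ ≤ 1 / cesaroA δ n *
        (192 * ((n : ℝ) + 1) ^ 2 * cesaroA δ n * ((1 / ((n : ℝ) + 1)) ^ 2 / 3)) := by
        gcongr
        exact hintegral.trans (by gcongr)
    _ = 64 := by field_simp; norm_num
end

section
/- For every δ ∈ (0,1) there exists a constant C = C(δ) > 0 such that for every integer n ≥ 1, (1/A_n^δ) · ∫_{Γ₂} u1 · | Σ_{k=0}^{n} A_{n−k}^{δ−1} · D*_k(u1,u2) | du1 du2 ≤ C · log(n+1)/(n+1)^δ, where Γ₂ = {(u1,u2) ∈ Γ : u1 ≥ 1/(n+1), u2 ≤ 1/(3(n+1))}. -/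
/-!
Write `D*_k = (P_{k+1} - P_k) / P_1`, where `P_m(u)` is the product of the three sines with
frequency `m`. Since `A^{δ-1}_m = ∑_{i ≤ m} A^{δ-2}_i`, Abel summation turns the kernel sum into
`∑_{i ≤ n} A^{δ-2}_i P_{n+1-i} / P_1`. For `0 ≤ δ ≤ 1` only `A^{δ-2}_0 = 1` is positive, so
`∑_i |A^{δ-2}_i| ≤ 2`; with `|P_m| ≤ (n+1)π u₂` and `P_1 ≥ u₁² u₂ / 6` on `Γ` (concavity of `sin`)
the integrand is at most `12π(n+1) / u₁`. Integrating over `[1/(n+1), 1] × [0, 1/(3(n+1))]` gives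
`4π log(n+1)`, and Bernoulli's inequality gives `A^δ_n ≥ (n+1)^δ`.
-/

open MeasureTheory Finset

theorem Finset.sum_range_partialSum_mul_sub {R : Type*} [CommRing R] (b F : ℕ → R) (n : ℕ) :
    ∑ k ∈ range (n + 1), (∑ i ∈ range (n - k + 1), b i) * (F (k + 1) - F k) =
      ∑ i ∈ range (n + 1), b i * (F (n - i + 1) - F 0) := by
  simp_rw [sum_mul]
  rw [sum_comm' (t' := range (n + 1)) (s' := fun i => range (n - i + 1))
    (fun k i => by simp only [mem_range]; omega)]
  simp_rw [← mul_sum, sum_range_sub]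

lemma cesaroA_zero (ε : ℝ) : cesaroA ε 0 = 1 := by simp [cesaroA]

lemma cesaroA_succ_s16 (ε : ℝ) (m : ℕ) :
    cesaroA ε (m + 1) = cesaroA ε m * (ε + m + 1) / (m + 1) := by
  simp only [cesaroA, prod_range_succ, Nat.factorial_succ]
  push_cast
  field_simp

lemma cesaroA_succ_eq_cesaroA_add_one (ε : ℝ) (m : ℕ) :
    cesaroA ε (m + 1) = cesaroA (ε + 1) m * (ε + 1) / (m + 1) := by
  simp only [cesaroA, prod_range_succ', Nat.factorial_succ]
  push_cast
  field_simp
  ring_nf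

lemma cesaroA_add_one_succ (ε : ℝ) (m : ℕ) :
    cesaroA (ε + 1) (m + 1) = cesaroA (ε + 1) m + cesaroA ε (m + 1) := by
  rw [cesaroA_succ_s16, cesaroA_succ_eq_cesaroA_add_one]
  field_simp
  ring

lemma cesaroA_add_one_eq_sum (ε : ℝ) (n : ℕ) :
    cesaroA (ε + 1) n = ∑ i ∈ range (n + 1), cesaroA ε i := by
  induction n with
  | zero => simp [cesaroA_zero]
  | succ n ih => rw [sum_range_succ, ← ih, cesaroA_add_one_succ]

lemma cesaroA_nonneg {ε : ℝ} (hε : -1 ≤ ε) (n : ℕ) : 0 ≤ cesaroA ε n := by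
  unfold cesaroA
  exact div_nonneg (prod_nonneg fun i _ => by linarith [(i.cast_nonneg : (0 : ℝ) ≤ i)])
    (Nat.cast_nonneg _)

lemma cesaroA_succ_nonpos {ε : ℝ} (h₁ : -2 ≤ ε) (h₂ : ε ≤ -1) (m : ℕ) :
    cesaroA ε (m + 1) ≤ 0 := by
  unfold cesaroA
  rw [prod_range_succ']
  refine div_nonpos_of_nonpos_of_nonneg (mul_nonpos_of_nonneg_of_nonpos ?_ ?_) (Nat.cast_nonneg _)
  · exact prod_nonneg fun i _ => by push_cast; linarith [(i.cast_nonneg : (0 : ℝ) ≤ i)]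
  · push_cast; linarith

/-- Only `A_0^ε = 1` is positive, so the absolute sum is `2 - (sum of the A_i^ε)`. -/
lemma sum_range_abs_cesaroA {ε : ℝ} (h₁ : -2 ≤ ε) (h₂ : ε ≤ -1) (n : ℕ) :
    ∑ i ∈ range (n + 1), |cesaroA ε i| = 2 - cesaroA (ε + 1) n := by
  rw [cesaroA_add_one_eq_sum, sum_range_succ', sum_range_succ' (cesaroA ε), cesaroA_zero,
    sum_congr rfl fun i _ => abs_of_nonpos (cesaroA_succ_nonpos h₁ h₂ i), sum_neg_distrib]
  norm_num
  ring

lemma rpow_le_cesaroA {δ : ℝ} (h₀ : 0 ≤ δ) (h₁ : δ ≤ 1) (n : ℕ) :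
    ((n : ℝ) + 1) ^ δ ≤ cesaroA δ n := by
  induction n with
  | zero => simp [cesaroA_zero]
  | succ n ih =>
    have hn : (0 : ℝ) < n + 1 := by positivity
    have hbern := rpow_one_add_le_one_add_mul_self (s := 1 / ((n : ℝ) + 1))
      (by linarith [one_div_pos.2 hn]) h₀ h₁
    calc ((↑(n + 1) : ℝ) + 1) ^ δ = ((n : ℝ) + 1) ^ δ * (1 + 1 / ((n : ℝ) + 1)) ^ δ := by
          rw [← Real.mul_rpow hn.le (by positivity)]
          congr 1
          push_cast
          field_simp
      _ ≤ cesaroA δ n * (1 + δ * (1 / ((n : ℝ) + 1))) :=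
          mul_le_mul ih hbern (by positivity) (cesaroA_nonneg (by linarith) n)
      _ = cesaroA δ (n + 1) := by
          rw [cesaroA_succ_s16]
          field_simp
          ring

noncomputable def sinProd (u : ℝ × ℝ) (m : ℕ) : ℝ :=
  Real.sin (m * Real.pi * u.2) * Real.sin (m * Real.pi * (u.1 + u.2) / 2) *
    Real.sin (m * Real.pi * (u.1 - u.2) / 2)

lemma DstarK_eq (k : ℕ) (u : ℝ × ℝ) :
    DstarK k u = (sinProd u (k + 1) - sinProd u k) / sinProd u 1 := by
  simp only [DstarK, sinProd]
  push_cast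
  ring_nf

@[simp]
lemma sinProd_zero (u : ℝ × ℝ) : sinProd u 0 = 0 := by simp [sinProd]

lemma abs_sinProd_le {u : ℝ × ℝ} (hu : 0 ≤ u.2) (m : ℕ) : |sinProd u m| ≤ m * Real.pi * u.2 := by
  rw [sinProd, abs_mul, abs_mul]
  calc |Real.sin (m * Real.pi * u.2)| * |Real.sin (m * Real.pi * (u.1 + u.2) / 2)| *
        |Real.sin (m * Real.pi * (u.1 - u.2) / 2)|
      ≤ |m * Real.pi * u.2| * 1 * 1 := by
        gcongr ?_ * ?_ * ?_
        exacts [Real.abs_sin_le_abs, Real.abs_sin_le_one _, Real.abs_sin_le_one _]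
    _ = m * Real.pi * u.2 := by rw [abs_of_nonneg (by positivity)]; ring

/-- Concavity of `sin` on `[0, π]`: it lies above its chord from `0` to `2π/3`, of slope
`(√3/2)/(2/3) ≥ 1`. -/
lemma le_sin_pi_mul {t : ℝ} (h₀ : 0 ≤ t) (h₁ : t ≤ 2 / 3) : t ≤ Real.sin (Real.pi * t) := by
  have hpi := Real.pi_pos
  have hchord := strictConcaveOn_sin_Icc.concaveOn.2
    (show (0 : ℝ) ∈ Set.Icc 0 Real.pi from ⟨le_rfl, hpi.le⟩)
    (show 2 * Real.pi / 3 ∈ Set.Icc 0 Real.pi from ⟨by positivity, by linarith⟩)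
    (show (0 : ℝ) ≤ 1 - 3 * t / 2 by linarith) (show (0 : ℝ) ≤ 3 * t / 2 by linarith)
    (by ring)
  have hsin : Real.sin (2 * Real.pi / 3) = Real.sqrt 3 / 2 := by
    rw [show 2 * Real.pi / 3 = Real.pi - Real.pi / 3 by ring, Real.sin_pi_sub,
      Real.sin_pi_div_three]
  have hsqrt : (4 : ℝ) / 3 ≤ Real.sqrt 3 := by
    nlinarith [Real.sq_sqrt (show (0 : ℝ) ≤ 3 by norm_num), Real.sqrt_nonneg 3]
  simp only [smul_eq_mul, mul_zero, zero_add, Real.sin_zero, hsin] at hchord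
  rw [show 3 * t / 2 * (2 * Real.pi / 3) = Real.pi * t by ring] at hchord
  nlinarith

lemma le_sinProd_one {x y : ℝ} (hy : 0 ≤ y) (hyx : y ≤ x / 3) (hx : x ≤ 1) :
    x ^ 2 * y / 6 ≤ sinProd (x, y) 1 := by
  have h₁ : y ≤ Real.sin (Real.pi * y) := le_sin_pi_mul hy (by linarith)
  have h₂ : (x + y) / 2 ≤ Real.sin (Real.pi * (x + y) / 2) := by
    rw [mul_div_assoc]; exact le_sin_pi_mul (by linarith) (by linarith)
  have h₃ : (x - y) / 2 ≤ Real.sin (Real.pi * (x - y) / 2) := by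
    rw [mul_div_assoc]; exact le_sin_pi_mul (by linarith) (by linarith)
  have h₁₂ : 0 ≤ Real.sin (Real.pi * y) * Real.sin (Real.pi * (x + y) / 2) :=
    mul_nonneg (hy.trans h₁) (le_trans (by linarith) h₂)
  calc x ^ 2 * y / 6 ≤ y * ((x + y) / 2) * ((x - y) / 2) := by
        nlinarith [mul_nonneg (mul_nonneg hy (by linarith : 0 ≤ x - 3 * y))
          (by linarith : 0 ≤ x + 3 * y)]
    _ ≤ sinProd (x, y) 1 := by
      simp only [sinProd, Nat.cast_one, one_mul]
      gcongr <;> linarith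

lemma sum_cesaroA_mul_DstarK (ε : ℝ) (n : ℕ) (u : ℝ × ℝ) :
    ∑ k ∈ range (n + 1), cesaroA (ε + 1) (n - k) * DstarK k u =
      (∑ i ∈ range (n + 1), cesaroA ε i * sinProd u (n - i + 1)) / sinProd u 1 := by
  simp_rw [DstarK_eq, mul_div_assoc', ← sum_div, cesaroA_add_one_eq_sum,
    sum_range_partialSum_mul_sub, sinProd_zero, sub_zero]

lemma abs_sum_cesaroA_mul_DstarK_le {δ : ℝ} (h₀ : 0 ≤ δ) (h₁ : δ ≤ 1) (n : ℕ) {x y : ℝ}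
    (hx : 0 < x) (hx₁ : x ≤ 1) (hy : 0 ≤ y) (hyx : y ≤ x / 3) :
    |∑ k ∈ range (n + 1), cesaroA (δ - 1) (n - k) * DstarK k (x, y)| ≤
      12 * Real.pi * (n + 1) / x ^ 2 := by
  have hsum := sum_cesaroA_mul_DstarK (δ - 2) n (x, y)
  rw [show δ - 2 + 1 = δ - 1 by ring] at hsum
  set N := ∑ i ∈ range (n + 1), cesaroA (δ - 2) i * sinProd (x, y) (n - i + 1)
  have hN : |N| ≤ 2 * ((n + 1) * Real.pi * y) :=
    calc |N| ≤ ∑ i ∈ range (n + 1), |cesaroA (δ - 2) i| * ((n + 1) * Real.pi * y) := by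
          refine (abs_sum_le_sum_abs _ _).trans (sum_le_sum fun i hi => ?_)
          rw [abs_mul]
          gcongr
          refine (abs_sinProd_le hy _).trans ?_
          gcongr
          exact_mod_cast Nat.succ_le_succ (Nat.sub_le n i)
      _ ≤ 2 * ((n + 1) * Real.pi * y) := by
          rw [← sum_mul, sum_range_abs_cesaroA (by linarith) (by linarith),
            show δ - 2 + 1 = δ - 1 by ring]
          gcongr
          linarith [cesaroA_nonneg (show -1 ≤ δ - 1 by linarith) n]
  have hD := le_sinProd_one hy hyx hx₁
  rw [hsum, abs_div]
  rcases (le_trans (by positivity) hD).eq_or_lt with hD0 | hD0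
  · rw [← hD0, abs_zero, div_zero]
    positivity
  · rw [abs_of_pos hD0, div_le_iff₀ hD0]
    calc |N| ≤ 2 * ((n + 1) * Real.pi * y) := hN
      _ = 12 * Real.pi * (n + 1) / x ^ 2 * (x ^ 2 * y / 6) := by field_simp; ring
      _ ≤ 12 * Real.pi * (n + 1) / x ^ 2 * sinProd (x, y) 1 := by gcongr

lemma measurableSet_GammaT : MeasurableSet GammaT := by
  unfold GammaT
  measurability

lemma setIntegral_Icc_prod_Icc_inv_fst {a b c : ℝ} (ha : 0 < a) (hab : a ≤ b) (hc : 0 ≤ c) :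
    ∫ u in Set.Icc a b ×ˢ Set.Icc 0 c, u.1⁻¹ = Real.log (b / a) * c := by
  have h := setIntegral_prod_mul (μ := volume) (ν := volume) (fun x : ℝ => x⁻¹)
    (fun _ : ℝ => (1 : ℝ)) (Set.Icc a b) (Set.Icc 0 c)
  rw [← Measure.volume_eq_prod] at h
  simp only [mul_one] at h
  rw [h, integral_Icc_eq_integral_Ioc, ← intervalIntegral.integral_of_le hab,
    integral_inv (by rw [Set.uIcc_of_le hab]; exact fun h0 => ha.not_ge h0.1)]
  simp [hc]

lemma setIntegral_abs_sum_cesaroA_mul_DstarK_le {δ : ℝ} (h₀ : 0 ≤ δ) (h₁ : δ ≤ 1) (n : ℕ) :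
    ∫ u in GammaT ∩ {u : ℝ × ℝ | 1 / ((n : ℝ) + 1) ≤ u.1 ∧ u.2 ≤ 1 / (3 * ((n : ℝ) + 1))},
        u.1 * |∑ k ∈ range (n + 1), cesaroA (δ - 1) (n - k) * DstarK k u| ≤
      4 * Real.pi * Real.log (n + 1) := by
  set a : ℝ := 1 / ((n : ℝ) + 1)
  set c : ℝ := 1 / (3 * ((n : ℝ) + 1))
  set S := GammaT ∩ {u : ℝ × ℝ | a ≤ u.1 ∧ u.2 ≤ c}
  set E := Set.Icc a 1 ×ˢ Set.Icc 0 c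
  set K : ℝ := 12 * Real.pi * (n + 1)
  have ha : 0 < a := by positivity
  have ha₁ : a ≤ 1 := div_le_one_of_le₀ (by linarith [n.cast_nonneg (α := ℝ)]) (by positivity)
  have hS : MeasurableSet S := measurableSet_GammaT.inter (by measurability)
  have hSE : S ⊆ E := fun u ⟨⟨hy, _, _, hx₁⟩, hxa, hyc⟩ => ⟨⟨hxa, hx₁⟩, ⟨hy, hyc⟩⟩
  have hE_int : IntegrableOn (fun u : ℝ × ℝ => K * u.1⁻¹) E :=
    (continuousOn_const.mul (continuous_fst.continuousOn.inv₀ fun u hu => (ha.trans_le hu.1.1).ne'))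
      |>.integrableOn_compact (isCompact_Icc.prod isCompact_Icc)
  calc ∫ u in S, u.1 * |∑ k ∈ range (n + 1), cesaroA (δ - 1) (n - k) * DstarK k u|
      ≤ ∫ u in S, K * u.1⁻¹ := by
        refine integral_mono_of_nonneg (ae_restrict_of_forall_mem hS fun u hu => ?_)
          (hE_int.mono_set hSE) (ae_restrict_of_forall_mem hS fun u hu => ?_)
        · exact mul_nonneg (ha.le.trans hu.2.1) (abs_nonneg _)
        · obtain ⟨⟨hy, hyx, -, hx₁⟩, hxa, -⟩ := hu
          have hx : 0 < u.1 := ha.trans_le hxa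
          calc u.1 * |∑ k ∈ range (n + 1), cesaroA (δ - 1) (n - k) * DstarK k u|
              ≤ u.1 * (K / u.1 ^ 2) :=
                mul_le_mul_of_nonneg_left
                  (abs_sum_cesaroA_mul_DstarK_le h₀ h₁ n hx hx₁ hy hyx) hx.le
            _ = K * u.1⁻¹ := by field_simp
    _ ≤ ∫ u in E, K * u.1⁻¹ :=
        setIntegral_mono_set hE_int (ae_restrict_of_forall_mem
          (measurableSet_Icc.prod measurableSet_Icc) fun u hu =>
            mul_nonneg (by positivity) (inv_nonneg.2 (ha.le.trans hu.1.1)))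
          hSE.eventuallyLE
    _ = 4 * Real.pi * Real.log (n + 1) := by
        rw [integral_const_mul, setIntegral_Icc_prod_Icc_inv_fst ha ha₁ (by positivity),
          one_div_one_div]
        simp only [K, c]
        field_simp
        ring

theorem stmt_16 :
    ∀ δ : ℝ, 0 < δ → δ < 1 → ∃ C : ℝ, 0 < C ∧
      ∀ n : ℕ, 1 ≤ n →
        (1 / cesaroA δ n) *
            ∫ u in GammaT ∩
                {u : ℝ × ℝ | 1 / ((n : ℝ) + 1) ≤ u.1 ∧ u.2 ≤ 1 / (3 * ((n : ℝ) + 1))},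
              u.1 * |∑ k ∈ Finset.range (n + 1), cesaroA (δ - 1) (n - k) * DstarK k u| ≤
          C * (Real.log (n + 1) / (n + 1 : ℝ) ^ δ) := by
  intro δ h₀ h₁
  refine ⟨4 * Real.pi, by positivity, fun n _ => ?_⟩
  have hA := rpow_le_cesaroA h₀.le h₁.le n
  have hpow : (0 : ℝ) < ((n : ℝ) + 1) ^ δ := by positivity
  calc _ ≤ 1 / cesaroA δ n * (4 * Real.pi * Real.log (n + 1)) :=
        mul_le_mul_of_nonneg_left (setIntegral_abs_sum_cesaroA_mul_DstarK_le h₀.le h₁.le n)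
          (one_div_nonneg.2 (hpow.trans_le hA).le)
    _ ≤ 1 / ((n : ℝ) + 1) ^ δ * (4 * Real.pi * Real.log (n + 1)) := by
        gcongr
        exact mul_nonneg (by positivity) (Real.log_nonneg (le_add_of_nonneg_left n.cast_nonneg))
    _ = 4 * Real.pi * (Real.log (n + 1) / (n + 1 : ℝ) ^ δ) := by ring
end
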